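/- For any positive definite matrix A ∈ R^{p×p}, the minimum value over lower triangular matrices L with positive diagonal of the Cholesky loss L_chol(L; A) = (1/2)·tr(A L Lᵀ) − log(det L) equals (1/2)·(p + log det A). -/

import Mathlib

/-!
With `B = Lᵀ A L` the loss is `½ (tr B - log det B) + ½ log det A`, and
`tr B - log det B = ∑ (λ - log λ) ≥ p` over the eigenvalues `λ > 0` of `B`, since `log λ ≤ λ - 1`.
The bound is attained at the Cholesky factor `L` of `A⁻¹ = L Lᵀ`, where `B = 1`.
-/

open Matrix

namespace Matrix

section Triangular

variable {n : Type*} [Fintype n] [LinearOrder n]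

theorem IsLowerTriangular.det_pos {R : Type*} [CommRing R] [PartialOrder R]
    [IsStrictOrderedRing R] {L : Matrix n n R} (hL : L.IsLowerTriangular)
    (hdiag : ∀ i, 0 < L i i) : 0 < L.det := by
  rw [det_of_isLowerTriangular L hL]
  exact Finset.prod_pos fun i _ => hdiag i

theorem IsLowerTriangular.exists_diag_pos_mul_transpose_eq {K : Type*} [Field K] [LinearOrder K]
    [IsStrictOrderedRing K] {L : Matrix n n K} (hL : L.IsLowerTriangular)
    (hdiag : ∀ i, L i i ≠ 0) :
    ∃ C : Matrix n n K, C.IsLowerTriangular ∧ (∀ i, 0 < C i i) ∧ C * Cᵀ = L * Lᵀ := by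
  -- flip the sign of every column whose diagonal entry is negative
  set s : n → K := fun i => |L i i| / L i i
  have hs : (fun i => s i * s i) = fun _ => 1 := funext fun i => by
    simp only [s, div_mul_div_comm, abs_mul_abs_self]
    exact div_self (mul_self_ne_zero.2 (hdiag i))
  refine ⟨L * diagonal s, hL.mul (blockTriangular_diagonal s), fun i => ?_, ?_⟩
  · rw [mul_diagonal, mul_div_cancel₀ _ (hdiag i)]
    exact abs_pos.2 (hdiag i)
  · rw [transpose_mul, diagonal_transpose, mul_assoc, ← mul_assoc (diagonal s),
      diagonal_mul_diagonal, hs, diagonal_one, one_mul]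

end Triangular

theorem PosDef.exists_isLowerTriangular_mul_transpose_eq {n : Type*} [Fintype n] [LinearOrder n]
    [WellFoundedLT n] [LocallyFiniteOrderBot n] {S : Matrix n n ℝ} (hS : S.PosDef) :
    ∃ C : Matrix n n ℝ, C.IsLowerTriangular ∧ (∀ i, 0 < C i i) ∧ C * Cᵀ = S := by
  set d := LDL.diagEntries hS
  have hd : ∀ i, 0 < d i := by
    have : (LDL.diag hS).PosDef := by
      have hinj : Function.Injective (LDL.lowerInv hS).vecMul :=
        vecMul_injective_of_isUnit (isUnit_of_invertible _)
      rw [LDL.diag_eq_lowerInv_conj hS]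
      exact hS.mul_mul_conjTranspose_same hinj
    exact posDef_diagonal_iff.1 this
  set C := LDL.lower hS * diagonal fun i => √(d i)
  have hW : (LDL.lowerInv hS).IsLowerTriangular := fun _ _ h => LDL.lowerInv_triangular hS h
  have hC : C.IsLowerTriangular :=
    (blockTriangular_inv_of_blockTriangular hW).mul (blockTriangular_diagonal _)
  have hCS : C * Cᵀ = S := by
    have hsqrt : (fun i => √(d i) * √(d i)) = d :=
      funext fun i => Real.mul_self_sqrt (hd i).le
    conv_rhs => rw [← LDL.lower_conj_diag hS]
    rw [transpose_mul, diagonal_transpose, mul_assoc, ← mul_assoc (diagonal _),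
      diagonal_mul_diagonal, hsqrt, conjTranspose_eq_transpose_of_trivial, ← mul_assoc]
    rfl
  have hdiag : ∀ i, C i i ≠ 0 := by
    have hdet : C.det ≠ 0 := by
      intro h
      have := hS.det_pos
      rw [← hCS, det_mul, h, zero_mul] at this
      exact this.false
    rw [det_of_isLowerTriangular C hC] at hdet
    exact fun i => Finset.prod_ne_zero_iff.1 hdet i (Finset.mem_univ i)
  obtain ⟨C', hC', hC'diag, hC'C⟩ := hC.exists_diag_pos_mul_transpose_eq hdiag
  exact ⟨C', hC', hC'diag, hC'C.trans hCS⟩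

section PosDef

variable {n : Type*} [Fintype n] [DecidableEq n]

theorem PosDef.card_le_trace_sub_log_det {B : Matrix n n ℝ} (hB : B.PosDef) :
    (Fintype.card n : ℝ) ≤ B.trace - Real.log B.det := by
  have hev := hB.eigenvalues_pos
  rw [hB.isHermitian.trace_eq_sum_eigenvalues, hB.isHermitian.det_eq_prod_eigenvalues]
  simp only [RCLike.ofReal_real_eq_id, id]
  rw [Real.log_prod fun i _ => (hev i).ne', ← Finset.sum_sub_distrib]
  calc (Fintype.card n : ℝ) = ∑ _i : n, (1 : ℝ) := by simp
    _ ≤ _ := Finset.sum_le_sum fun i _ => by linarith [Real.log_le_sub_one_of_pos (hev i)]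

theorem PosDef.card_add_log_det_le_trace_mul_mul_transpose_sub {A : Matrix n n ℝ} (hA : A.PosDef)
    {L : Matrix n n ℝ} (hL : 0 < L.det) :
    (Fintype.card n : ℝ) + Real.log A.det ≤ (A * L * Lᵀ).trace - 2 * Real.log L.det := by
  have hB : (Lᵀ * A * L).PosDef := by
    simpa only [conjTranspose_eq_transpose_of_trivial] using
      hA.conjTranspose_mul_mul_same
        (mulVec_injective_of_isUnit ((isUnit_iff_isUnit_det L).2 hL.ne'.isUnit))
  have htrace : (A * L * Lᵀ).trace = (Lᵀ * A * L).trace := by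
    rw [trace_mul_comm, mul_assoc]
  have hlogdet : Real.log (Lᵀ * A * L).det = Real.log A.det + 2 * Real.log L.det := by
    rw [det_mul, det_mul, det_transpose, Real.log_mul (mul_pos hL hA.det_pos).ne' hL.ne',
      Real.log_mul hL.ne' hA.det_pos.ne']
    ring
  linarith [hB.card_le_trace_sub_log_det]

end PosDef

end Matrix

theorem cholLoss_min_value {p : ℕ} (A : Matrix (Fin p) (Fin p) ℝ) (hA : A.PosDef) :
    IsLeast
      {v : ℝ | ∃ L : Matrix (Fin p) (Fin p) ℝ,
        (∀ i j, i < j → L i j = 0) ∧ (∀ i, 0 < L i i) ∧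
        v = (1 / 2) * (A * L * Lᵀ).trace - Real.log L.det}
      ((1 / 2) * ((p : ℝ) + Real.log A.det)) := by
  obtain ⟨C, hC, hCdiag, hCA⟩ := hA.inv.exists_isLowerTriangular_mul_transpose_eq
  refine ⟨⟨C, fun i j h => hC h, hCdiag, ?_⟩, ?_⟩
  · have hCdet := hC.det_pos hCdiag
    have hdet : C.det * C.det = A.det⁻¹ := by
      simpa only [det_mul, det_transpose, det_nonsing_inv, Ring.inverse_eq_inv'] using
        congrArg det hCA
    have hlog : 2 * Real.log C.det = - Real.log A.det := by
      rw [two_mul, ← Real.log_mul hCdet.ne' hCdet.ne', hdet, Real.log_inv]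
    rw [mul_assoc, hCA, mul_nonsing_inv A hA.det_pos.ne'.isUnit, trace_one, Fintype.card_fin]
    linarith
  · rintro v ⟨L, hL, hLdiag, rfl⟩
    have := hA.card_add_log_det_le_trace_mul_mul_transpose_sub
      (IsLowerTriangular.det_pos (fun i j h => hL i j h) hLdiag)
    rw [Fintype.card_fin] at this
    linarith
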